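/- arXiv:1803.02867 — 2 statements merged into one kernel-verified Lean document; each statement's English description precedes it below -/
import Mathlib

section
/- For any nonnegative integers n and i, the integral of (u - 1/2)^((i+1)/(2n+1)) over u in [0,1] equals 0 if i is even, and equals (2n+1)/(2n+2+i) * 2^(-(i+1)/(2n+1)) if i is odd, where fractional powers of negative numbers are interpreted via the odd (2n+1)-th real root. -/
/-!
After the shift `v = u - 1/2` the integral runs over `[-1/2, 1/2]`. Since `2n + 1` is odd, the
root `r` is odd and `|r v| = |v| ^ (1/(2n+1))`. For even `i` the integrand `r v ^ (i+1)` is odd,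
so the integral vanishes; for odd `i` it is the even function `|v| ^ ((i+1)/(2n+1))`, whose
integral is twice the elementary one over `[0, 1/2]`.
-/

open Real

namespace intervalIntegral

variable {E : Type*} [NormedAddCommGroup E] [NormedSpace ℝ E] {f : ℝ → E}

theorem integral_neg_self_of_odd (hf : ∀ x, f (-x) = -f x) (a : ℝ) :
    ∫ x in -a..a, f x = 0 := by
  have h := integral_comp_neg (a := -a) (b := a) f
  simp only [hf, integral_neg, neg_neg] at h
  have := IsAddTorsionFree.of_isTorsionFree ℝ E
  exact self_eq_neg.mp h.symm

theorem integral_neg_self_of_even (hf : ∀ x, f (-x) = f x) {a : ℝ}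
    (hfa : IntervalIntegrable f MeasureTheory.volume 0 a) :
    ∫ x in -a..a, f x = (2 : ℝ) • ∫ x in 0..a, f x := by
  have hfa' : IntervalIntegrable f MeasureTheory.volume (-a) 0 := by
    rw [IntervalIntegrable.iff_comp_neg]
    simpa only [hf, neg_neg, neg_zero] using hfa.symm
  have hleft : ∫ x in -a..0, f x = ∫ x in 0..a, f x := by
    simpa only [hf, neg_zero] using (integral_comp_neg (a := 0) (b := a) f).symm
  rw [← integral_add_adjacent_intervals hfa' hfa, hleft, two_smul]

end intervalIntegral

theorem integral_abs_rpow_neg_self {a p : ℝ} (ha : 0 ≤ a) (hp : -1 < p) :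
    ∫ x in -a..a, |x| ^ p = 2 * a ^ (p + 1) / (p + 1) := by
  have hint : IntervalIntegrable (fun x => |x| ^ p) MeasureTheory.volume 0 a :=
    (intervalIntegral.intervalIntegrable_rpow' hp).congr fun x hx => by
      rw [Set.uIoc_of_le ha] at hx
      rw [abs_of_pos hx.1]
  have hpos : ∫ x in 0..a, |x| ^ p = ∫ x in 0..a, x ^ p :=
    intervalIntegral.integral_congr fun x hx => by
      rw [Set.uIcc_of_le ha] at hx
      rw [abs_of_nonneg hx.1]
  rw [intervalIntegral.integral_neg_self_of_even (fun x => by rw [abs_neg]) hint, hpos,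
    integral_rpow (Or.inl hp), zero_rpow (by linarith), smul_eq_mul]
  ring

theorem abs_eq_abs_rpow_inv_of_pow_eq {k : ℕ} (hk : k ≠ 0) {x y : ℝ} (h : y ^ k = x) :
    |y| = |x| ^ (k⁻¹ : ℝ) := by
  rw [← h, abs_pow, pow_rpow_inv_natCast (abs_nonneg y) hk]

theorem neg_eq_of_odd_pow_eq {k : ℕ} (hk : Odd k) {x y z : ℝ} (hy : y ^ k = x)
    (hz : z ^ k = -x) : z = -y :=
  hk.strictMono_pow.injective <| by simp only [hz, hk.neg_pow, hy]

/-- integral of the `(i+1)`-th power of the `(2n+1)`-th real root of `u - 1/2`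
over `[0,1]` is `0` for even `i` and `(2n+1)/(2n+2+i) * 2^(-(i+1)/(2n+1))` for odd `i`. -/
theorem stmt1 (n i : ℕ) (r : ℝ → ℝ) (hr : ∀ x : ℝ, r x ^ (2 * n + 1) = x) :
    ∫ u in (0:ℝ)..1, (r (u - 1/2)) ^ (i + 1) =
      if Even i then 0
      else ((2 * n + 1 : ℝ)) / (2 * n + 2 + i) * (2:ℝ) ^ (-((i:ℝ) + 1) / (2 * n + 1)) := by
  have hk : Odd (2 * n + 1) := odd_two_mul_add_one n
  have hr_neg (x : ℝ) : r (-x) = -r x := neg_eq_of_odd_pow_eq hk (hr x) (hr (-x))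
  rw [intervalIntegral.integral_comp_sub_right (fun v => r v ^ (i + 1)),
    show (0 : ℝ) - 1 / 2 = -(1 / 2) by norm_num, show (1 : ℝ) - 1 / 2 = 1 / 2 by norm_num]
  split_ifs with hi
  · exact intervalIntegral.integral_neg_self_of_odd
      (fun x => by rw [hr_neg, hi.add_one.neg_pow]) _
  · have hroot_pow (v : ℝ) : r v ^ (i + 1) = |v| ^ (((i : ℝ) + 1) / (2 * n + 1)) := by
      rw [← (Nat.not_even_iff_odd.mp hi).add_one.pow_abs,
        abs_eq_abs_rpow_inv_of_pow_eq (by omega) (hr v), ← rpow_natCast,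
        ← rpow_mul (abs_nonneg v)]
      push_cast
      rw [inv_mul_eq_div]
    simp only [hroot_pow]
    rw [integral_abs_rpow_neg_self (by norm_num) (neg_one_lt_zero.trans_le (by positivity)),
      rpow_add_one (by norm_num), neg_div, rpow_neg zero_le_two, one_div,
      ← inv_rpow zero_le_two]
    field_simp
    ring
end

section
/- Let k ≥ 2 be an even integer, n ≥ 0 an integer, and (2n+3)/(k(2n+1)) < θ < 1. Then the polynomial P(z) = ((2n+1)/(2n+k+1)) * 2^(k/(2n+1)) * z^(k+1) + ∑_{i odd, 1 ≤ i ≤ k-1} r_θ(k,i) * z^i, with r_θ(k,i) as defined, has exactly one root z₀ > 0, and -z₀ is also a root. -/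
/-!
`P` is odd, so only its positive roots matter. Write `P z = ∑ cᵢ zⁱ`. The ratio
`i / (k - i + 1) * ((2n + 2 + i) / (2n + i)) = i / (2n + i) * ((2n + 2 + i) / (k - i + 1))`
is a product of two positive increasing factors, so the coefficients are negative up to some
index `m` and nonnegative afterwards: one sign change, with `c₁ < 0` by the lower bound on `θ`
and positive leading coefficient. If `P x = 0` and `t > 1`, then
`P (t x) = P (t x) - tᵐ P x = ∑ cᵢ xⁱ (tⁱ - tᵐ)`, a sum of nonnegative terms with a positive top
term, so there is at most one positive root. As `P < 0` near `0⁺` and `P > 0` near `+∞`, the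
intermediate value theorem gives one.
-/

open Finset Filter Topology

section OneSignChange

variable {s : Finset ℕ} {c : ℕ → ℝ}

theorem tendsto_sum_mul_pow_nhds_zero {e : ℕ → ℕ} {j : ℕ} (hj : j ∈ s) (hej : e j = 0)
    (he : ∀ i ∈ s, i ≠ j → e i ≠ 0) :
    Tendsto (fun w : ℝ => ∑ i ∈ s, c i * w ^ e i) (𝓝 0) (𝓝 (c j)) := by
  have hcont : Continuous (fun w : ℝ => ∑ i ∈ s, c i * w ^ e i) := by fun_prop
  convert hcont.tendsto 0 using 2
  rw [sum_eq_single_of_mem j hj fun i hi hij => by rw [zero_pow (he i hi hij), mul_zero],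
    hej, pow_zero, mul_one]

theorem sum_mul_pow_eq_pow_mul_sum_sub {j : ℕ} (hmin : ∀ i ∈ s, j ≤ i) (x : ℝ) :
    ∑ i ∈ s, c i * x ^ i = x ^ j * ∑ i ∈ s, c i * x ^ (i - j) := by
  rw [mul_sum]
  refine sum_congr rfl fun i hi => ?_
  rw [← Nat.add_sub_cancel' (hmin i hi), pow_add, Nat.add_sub_cancel_left]
  ring

theorem sum_mul_pow_eq_pow_mul_sum_inv {N : ℕ} (hmax : ∀ i ∈ s, i ≤ N) {x : ℝ} (hx : x ≠ 0) :
    ∑ i ∈ s, c i * x ^ i = x ^ N * ∑ i ∈ s, c i * x⁻¹ ^ (N - i) := by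
  rw [mul_sum]
  refine sum_congr rfl fun i hi => ?_
  rw [← Nat.add_sub_cancel' (hmax i hi), pow_add, Nat.add_sub_cancel_left, inv_pow]
  field_simp

theorem exists_pos_sum_mul_pow_neg {j : ℕ} (hj : j ∈ s) (hmin : ∀ i ∈ s, j ≤ i) (hcj : c j < 0) :
    ∃ x : ℝ, 0 < x ∧ ∑ i ∈ s, c i * x ^ i < 0 := by
  have hlim : Tendsto (fun w : ℝ => ∑ i ∈ s, c i * w ^ (i - j)) (𝓝[>] 0) (𝓝 (c j)) :=
    (tendsto_sum_mul_pow_nhds_zero (e := (· - j)) hj (Nat.sub_self j) fun i hi hij => by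
      have := hmin i hi; omega).mono_left nhdsWithin_le_nhds
  obtain ⟨x, hgx, hx⟩ := ((hlim.eventually (gt_mem_nhds hcj)).and self_mem_nhdsWithin).exists
  exact ⟨x, hx, by
    rw [sum_mul_pow_eq_pow_mul_sum_sub hmin]; exact mul_neg_of_pos_of_neg (pow_pos hx j) hgx⟩

theorem exists_pos_sum_mul_pow_pos {N : ℕ} (hN : N ∈ s) (hmax : ∀ i ∈ s, i ≤ N) (hcN : 0 < c N) :
    ∃ y : ℝ, 0 < y ∧ 0 < ∑ i ∈ s, c i * y ^ i := by
  have hlim : Tendsto (fun w : ℝ => ∑ i ∈ s, c i * w ^ (N - i)) (𝓝[>] 0) (𝓝 (c N)) :=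
    (tendsto_sum_mul_pow_nhds_zero (e := (N - ·)) hN (Nat.sub_self N) fun i hi hiN => by
      have := hmax i hi; omega).mono_left nhdsWithin_le_nhds
  obtain ⟨w, hgw, hw : 0 < w⟩ :=
    ((hlim.eventually (lt_mem_nhds hcN)).and self_mem_nhdsWithin).exists
  refine ⟨w⁻¹, inv_pos.2 hw, ?_⟩
  rw [sum_mul_pow_eq_pow_mul_sum_inv hmax (inv_ne_zero hw.ne'), inv_inv]
  exact mul_pos (pow_pos (inv_pos.2 hw) N) hgw

section Pivot

variable {m N : ℕ} (hneg : ∀ i ∈ s, i ≤ m → c i ≤ 0) (hpos : ∀ i ∈ s, m < i → 0 ≤ c i)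
include hneg hpos

theorem sum_mul_pow_pos_of_eq_zero (hN : N ∈ s) (hcN : 0 < c N) {x y : ℝ} (hx : 0 < x)
    (hxy : x < y) (hroot : ∑ i ∈ s, c i * x ^ i = 0) : 0 < ∑ i ∈ s, c i * y ^ i := by
  obtain ⟨t, ht, rfl⟩ : ∃ t : ℝ, 1 < t ∧ y = x * t :=
    ⟨y / x, (one_lt_div hx).2 hxy, by field_simp⟩
  have hterm : ∀ i ∈ s, 0 ≤ c i * x ^ i * (t ^ i - t ^ m) := by
    intro i hi
    rcases le_or_gt i m with him | hmi
    · exact mul_nonneg_of_nonpos_of_nonpos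
        (mul_nonpos_of_nonpos_of_nonneg (hneg i hi him) (pow_pos hx i).le)
        (sub_nonpos.2 (pow_le_pow_right₀ ht.le him))
    · exact mul_nonneg (mul_nonneg (hpos i hi hmi) (pow_pos hx i).le)
        (sub_nonneg.2 (pow_le_pow_right₀ ht.le hmi.le))
  have hmN : m < N := lt_of_not_ge fun hNm => (hneg N hN hNm).not_gt hcN
  have hN_pos : 0 < c N * x ^ N * (t ^ N - t ^ m) :=
    mul_pos (mul_pos hcN (pow_pos hx N)) (sub_pos.2 (pow_lt_pow_right₀ ht hmN))
  calc 0 < ∑ i ∈ s, c i * x ^ i * (t ^ i - t ^ m) := sum_pos' hterm ⟨N, hN, hN_pos⟩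
    _ = ∑ i ∈ s, c i * (x * t) ^ i - t ^ m * ∑ i ∈ s, c i * x ^ i := by
      rw [mul_sum, ← sum_sub_distrib]
      exact sum_congr rfl fun i _ => by ring
    _ = ∑ i ∈ s, c i * (x * t) ^ i := by rw [hroot, mul_zero, sub_zero]

theorem existsUnique_pos_sum_mul_pow_eq_zero {j : ℕ} (hj : j ∈ s) (hmin : ∀ i ∈ s, j ≤ i)
    (hcj : c j < 0) (hN : N ∈ s) (hmax : ∀ i ∈ s, i ≤ N) (hcN : 0 < c N) :
    ∃! z : ℝ, 0 < z ∧ ∑ i ∈ s, c i * z ^ i = 0 := by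
  obtain ⟨x, hx, hfx⟩ := exists_pos_sum_mul_pow_neg hj hmin hcj
  obtain ⟨y, hy, hfy⟩ := exists_pos_sum_mul_pow_pos hN hmax hcN
  have hcont : Continuous (fun z : ℝ => ∑ i ∈ s, c i * z ^ i) := by fun_prop
  obtain ⟨z, hz, hfz⟩ :=
    intermediate_value_uIcc hcont.continuousOn (Set.mem_uIcc_of_le hfx.le hfy.le)
  have hz_pos : 0 < z := (lt_min hx hy).trans_le hz.1
  refine ⟨z, ⟨hz_pos, hfz⟩, fun z' ⟨hz', hfz'⟩ => ?_⟩
  rcases lt_trichotomy z' z with h | h | h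
  · exact absurd hfz (sum_mul_pow_pos_of_eq_zero hneg hpos hN hcN hz' h hfz').ne'
  · exact h
  · exact absurd hfz' (sum_mul_pow_pos_of_eq_zero hneg hpos hN hcN hz_pos h hfz).ne'

end Pivot

theorem sum_mul_pow_neg_of_odd (hodd : ∀ i ∈ s, Odd i) (z : ℝ) :
    ∑ i ∈ s, c i * (-z) ^ i = -∑ i ∈ s, c i * z ^ i := by
  rw [← sum_neg_distrib]
  exact sum_congr rfl fun i hi => by rw [(hodd i hi).neg_pow, mul_neg]

end OneSignChange

theorem exists_mem_forall_lt_iff_le_of_monotoneOn {α β : Type*} [LinearOrder α] [Preorder β]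
    {s : Finset α} {g : α → β} {θ : β} (hg : MonotoneOn g s) {j : α} (hj : j ∈ s)
    (hgj : g j < θ) : ∃ m ∈ s, ∀ i ∈ s, g i < θ ↔ i ≤ m := by
  classical
  have hne : (s.filter (g · < θ)).Nonempty := ⟨j, mem_filter.2 ⟨hj, hgj⟩⟩
  obtain ⟨hm, hgm⟩ := mem_filter.1 (max'_mem _ hne)
  refine ⟨_, hm, fun i hi => ⟨fun hgi => le_max' _ i (mem_filter.2 ⟨hi, hgi⟩), fun him => ?_⟩⟩
  exact (hg hi hm him).trans_lt hgm

theorem monotoneOn_div_mul_div {a K : ℝ} (ha : 0 ≤ a) :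
    MonotoneOn (fun x => x / (K - x + 1) * ((a + 2 + x) / (a + x))) (Set.Ioc 0 K) := by
  intro x ⟨hx, hxK⟩ y ⟨hy, hyK⟩ hxy
  have hfactor : ∀ z : ℝ, z / (K - z + 1) * ((a + 2 + z) / (a + z))
      = z / (a + z) * ((a + 2 + z) / (K - z + 1)) := fun z => by
    rw [div_mul_div_comm, div_mul_div_comm, mul_comm (K - z + 1)]
  simp only [hfactor]
  have hfrac : x / (a + x) ≤ y / (a + y) := by
    rw [div_le_div_iff₀ (by linarith) (by linarith)]
    nlinarith
  refine mul_le_mul hfrac ?_ (by positivity) (by positivity)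
  exact div_le_div₀ (by linarith) (by linarith) (by linarith) (by linarith)

noncomputable def leadCoeff (k n : ℕ) : ℝ :=
  ((2 * (n:ℝ) + 1) / (2 * (n:ℝ) + (k:ℝ) + 1)) * (2:ℝ) ^ ((k:ℝ) / (2 * (n:ℝ) + 1))

noncomputable def rWeight (k n i : ℕ) : ℝ :=
  (k.choose i : ℝ) * ((2 * (n:ℝ) + 1) / (2 * (n:ℝ) + 2 + i))
    * (2:ℝ) ^ (((i:ℝ) - 1) / (2 * (n:ℝ) + 1))

noncomputable def rRatio (k n i : ℕ) : ℝ :=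
  (i:ℝ) / ((k:ℝ) - i + 1) * ((2 * (n:ℝ) + 2 + i) / (2 * (n:ℝ) + i))

/-- The coefficient of `z ^ i` in `P`; below the leading index `k + 1` it is
`r_θ(k, i) = rWeight k n i * (rRatio k n i - θ)`. -/
noncomputable def pCoeff (k n : ℕ) (θ : ℝ) (i : ℕ) : ℝ :=
  if i = k + 1 then leadCoeff k n else rWeight k n i * (rRatio k n i - θ)

def pSupport (k : ℕ) : Finset ℕ :=
  insert (k + 1) ((range k).filter Odd)

section Coefficients

variable {k n : ℕ} {θ : ℝ}

theorem leadCoeff_pos : 0 < leadCoeff k n := by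
  unfold leadCoeff; positivity

theorem rWeight_pos {i : ℕ} (hik : i ≤ k) : 0 < rWeight k n i := by
  have := Nat.choose_pos hik
  unfold rWeight; positivity

theorem rRatio_one : rRatio k n 1 = (2 * (n:ℝ) + 3) / ((k:ℝ) * (2 * (n:ℝ) + 1)) := by
  unfold rRatio
  push_cast
  rw [div_mul_div_comm]
  congr 1 <;> ring

theorem monotoneOn_rRatio : MonotoneOn (rRatio k n) (Set.Icc 1 k) := by
  intro i ⟨hi1, hik⟩ j ⟨hj1, hjk⟩ hij
  have hmem : ∀ l : ℕ, 1 ≤ l → l ≤ k → (l:ℝ) ∈ Set.Ioc 0 (k:ℝ) := fun l h1 hk =>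
    ⟨by exact_mod_cast h1, by exact_mod_cast hk⟩
  exact monotoneOn_div_mul_div (by positivity) (hmem i hi1 hik) (hmem j hj1 hjk)
    (by exact_mod_cast hij)

theorem pCoeff_succ : pCoeff k n θ (k + 1) = leadCoeff k n := if_pos rfl

theorem pCoeff_of_lt {i : ℕ} (hik : i < k) :
    pCoeff k n θ i = rWeight k n i * (rRatio k n i - θ) :=
  if_neg (by omega)

theorem sum_pSupport_pCoeff_mul_pow (z : ℝ) :
    ∑ i ∈ pSupport k, pCoeff k n θ i * z ^ i = leadCoeff k n * z ^ (k + 1)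
      + ∑ i ∈ (range k).filter Odd, rWeight k n i * (rRatio k n i - θ) * z ^ i := by
  rw [pSupport, sum_insert (by simp), pCoeff_succ]
  congr 1
  exact sum_congr rfl fun i hi => by rw [pCoeff_of_lt (mem_range.1 (mem_filter.1 hi).1)]

theorem mem_pSupport {i : ℕ} : i ∈ pSupport k ↔ i = k + 1 ∨ i < k ∧ Odd i := by
  simp only [pSupport, mem_insert, mem_filter, mem_range]

theorem one_mem_pSupport (hk : 2 ≤ k) : 1 ∈ pSupport k :=
  mem_pSupport.2 (Or.inr ⟨by omega, odd_one⟩)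

theorem odd_of_mem_pSupport (hke : Even k) {i : ℕ} (hi : i ∈ pSupport k) : Odd i := by
  obtain rfl | ⟨-, hodd⟩ := mem_pSupport.1 hi
  exacts [hke.add_one, hodd]

theorem one_le_of_mem_pSupport {i : ℕ} (hi : i ∈ pSupport k) : 1 ≤ i := by
  obtain rfl | ⟨-, hodd⟩ := mem_pSupport.1 hi
  exacts [by omega, hodd.pos]

theorem le_of_mem_pSupport {i : ℕ} (hi : i ∈ pSupport k) : i ≤ k + 1 := by
  obtain rfl | ⟨hik, -⟩ := mem_pSupport.1 hi
  exacts [le_rfl, by omega]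

section ThetaBound

variable (hk : 2 ≤ k) (hθ : (2 * (n:ℝ) + 3) / ((k:ℝ) * (2 * (n:ℝ) + 1)) < θ)
include hk hθ

theorem pCoeff_one_neg : pCoeff k n θ 1 < 0 := by
  rw [pCoeff_of_lt (by omega)]
  exact mul_neg_of_pos_of_neg (rWeight_pos (by omega)) (sub_neg.2 (rRatio_one ▸ hθ))

theorem exists_pCoeff_sign_change :
    ∃ m, (∀ i ∈ pSupport k, i ≤ m → pCoeff k n θ i ≤ 0) ∧
      (∀ i ∈ pSupport k, m < i → 0 ≤ pCoeff k n θ i) := by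
  set F := (range k).filter Odd
  have hF : ∀ i ∈ F, 1 ≤ i ∧ i < k := fun i hi => by
    obtain ⟨hik, hodd⟩ := mem_filter.1 hi
    exact ⟨hodd.pos, mem_range.1 hik⟩
  have hmono : MonotoneOn (rRatio k n) F := monotoneOn_rRatio.mono fun i hi =>
    ⟨(hF i hi).1, (hF i hi).2.le⟩
  have h1 : 1 ∈ F := mem_filter.2 ⟨mem_range.2 (by omega), odd_one⟩
  obtain ⟨m, hmF, hm⟩ := exists_mem_forall_lt_iff_le_of_monotoneOn hmono h1 (rRatio_one ▸ hθ)
  have hmk := (hF m hmF).2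
  refine ⟨m, fun i hi him => ?_, fun i hi hmi => ?_⟩
  · obtain rfl | hi := mem_insert.1 hi
    · omega
    rw [pCoeff_of_lt (hF i hi).2]
    exact mul_nonpos_of_nonneg_of_nonpos (rWeight_pos (hF i hi).2.le).le
      (sub_nonpos.2 ((hm i hi).2 him).le)
  · obtain rfl | hi := mem_insert.1 hi
    · rw [pCoeff_succ]; exact leadCoeff_pos.le
    rw [pCoeff_of_lt (hF i hi).2]
    exact mul_nonneg (rWeight_pos (hF i hi).2.le).le
      (sub_nonneg.2 (not_lt.1 fun h => hmi.not_ge ((hm i hi).1 h)))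

end ThetaBound

end Coefficients

theorem stmt8_general (k n : ℕ) (hk : 2 ≤ k) (hke : Even k) (θ : ℝ)
    (hθc : (2 * (n:ℝ) + 3) / ((k:ℝ) * (2 * (n:ℝ) + 1)) < θ)
    (P : ℝ → ℝ)
    (hP : P = fun z : ℝ =>
      ((2 * (n:ℝ) + 1) / (2 * (n:ℝ) + (k:ℝ) + 1)) * (2:ℝ) ^ ((k:ℝ) / (2 * (n:ℝ) + 1))
          * z ^ (k + 1)
        + ∑ i ∈ (Finset.range k).filter (fun i => Odd i),
            (k.choose i : ℝ) * ((2 * (n:ℝ) + 1) / (2 * (n:ℝ) + 2 + i))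
              * (2:ℝ) ^ (((i:ℝ) - 1) / (2 * (n:ℝ) + 1))
              * ((i:ℝ) / ((k:ℝ) - i + 1) * ((2 * (n:ℝ) + 2 + i) / (2 * (n:ℝ) + i)) - θ)
              * z ^ i) :
    ∃ z₀ : ℝ, 0 < z₀ ∧ P z₀ = 0 ∧ P (-z₀) = 0 ∧ ∀ z : ℝ, 0 < z → P z = 0 → z = z₀ := by
  have hPs : P = fun z => ∑ i ∈ pSupport k, pCoeff k n θ i * z ^ i := by
    rw [hP]
    ext z
    rw [sum_pSupport_pCoeff_mul_pow]
    rfl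
  obtain ⟨m, hneg, hpos⟩ := exists_pCoeff_sign_change hk hθc
  obtain ⟨z₀, ⟨hz₀, hPz₀⟩, huniq⟩ := existsUnique_pos_sum_mul_pow_eq_zero hneg hpos
    (one_mem_pSupport hk) (fun _ => one_le_of_mem_pSupport) (pCoeff_one_neg hk hθc)
    (mem_pSupport.2 (Or.inl rfl)) (fun _ => le_of_mem_pSupport) (pCoeff_succ ▸ leadCoeff_pos)
  simp only [hPs]
  refine ⟨z₀, hz₀, hPz₀, ?_, fun z hz hPz => huniq z ⟨hz, hPz⟩⟩
  rw [sum_mul_pow_neg_of_odd fun _ => odd_of_mem_pSupport hke]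
  exact neg_eq_zero.2 hPz₀

/-- for even `k ≥ 2` and `(2n+3)/(k(2n+1)) < θ < 1`, `P` has exactly one
positive root `z₀`, and `-z₀` is also a root. -/
theorem stmt8 (k n : ℕ) (hk : 2 ≤ k) (hke : Even k) (θ : ℝ)
    (hθc : (2 * (n:ℝ) + 3) / ((k:ℝ) * (2 * (n:ℝ) + 1)) < θ) (hθ1 : θ < 1)
    (P : ℝ → ℝ)
    (hP : P = fun z : ℝ =>
      ((2 * (n:ℝ) + 1) / (2 * (n:ℝ) + (k:ℝ) + 1)) * (2:ℝ) ^ ((k:ℝ) / (2 * (n:ℝ) + 1))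
          * z ^ (k + 1)
        + ∑ i ∈ (Finset.range k).filter (fun i => Odd i),
            (k.choose i : ℝ) * ((2 * (n:ℝ) + 1) / (2 * (n:ℝ) + 2 + i))
              * (2:ℝ) ^ (((i:ℝ) - 1) / (2 * (n:ℝ) + 1))
              * ((i:ℝ) / ((k:ℝ) - i + 1) * ((2 * (n:ℝ) + 2 + i) / (2 * (n:ℝ) + i)) - θ)
              * z ^ i) :
    ∃ z₀ : ℝ, 0 < z₀ ∧ P z₀ = 0 ∧ P (-z₀) = 0 ∧ ∀ z : ℝ, 0 < z → P z = 0 → z = z₀ :=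
  stmt8_general k n hk hke θ hθc P hP
end
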